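/- arXiv:1404.7090 — 10 statements merged into one kernel-verified Lean document; each statement's English description precedes it below -/
import Mathlib

section
/- Over any ring $R$, every $n\times n$ diagonal matrix with $n\geq 2$ is the sum of two invertible matrices in $\mathbb{M}_n(R)$. -/
open Matrix

/-- A matrix whose nonzero entries strictly decrease a potential function `f` is nilpotent. -/
lemma aux_pow_eq_zero {R : Type*} [Ring R] {n : ℕ} (M : Matrix (Fin n) (Fin n) R)
    (f : Fin n → ℕ) (hf : ∀ i, f i < n) (h : ∀ i j, M i j ≠ 0 → f j < f i) :
    M ^ n = 0 := by
  have key : ∀ k, ∀ i j : Fin n, f i < f j + k → (M ^ k) i j = 0 := by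
    intro k
    induction k with
    | zero =>
      intro i j hij
      have hne : i ≠ j := by rintro rfl; omega
      simp [Matrix.one_apply, hne]
    | succ k ih =>
      intro i j hij
      rw [pow_succ', Matrix.mul_apply]
      refine Finset.sum_eq_zero (fun l _ => ?_)
      by_cases hMl : M i l = 0
      · simp [hMl]
      · have h1 : f l < f i := h i l hMl
        have h2 : f l < f j + k := by omega
        rw [ih l j h2, mul_zero]
  ext i j
  have : f i < f j + n := by have := hf i; omega
  simp [key n i j this]

/-- Over any ring `R`, every `n × n` diagonal matrix with `n ≥ 2` is the sum of two
invertible matrices in `Matrix (Fin n) (Fin n) R`. -/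
theorem diagonal_matrix_sum_two_units (R : Type*) [Ring R] (n : ℕ) (hn : 2 ≤ n)
    (D : Matrix (Fin n) (Fin n) R) (hD : D.IsDiag) :
    ∃ A B : Matrix (Fin n) (Fin n) R, IsUnit A ∧ IsUnit B ∧ D = A + B := by
  obtain ⟨m, rfl⟩ : ∃ m, n = m + 2 := ⟨n - 2, by omega⟩
  set σ : Equiv.Perm (Fin (m + 2)) := finRotate (m + 2) with hσ
  set P : Matrix (Fin (m + 2)) (Fin (m + 2)) R := σ.toPEquiv.toMatrix with hP
  set P' : Matrix (Fin (m + 2)) (Fin (m + 2)) R := σ.symm.toPEquiv.toMatrix with hP'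
  set s : Fin (m + 2) → R := fun j => if j = 0 then -1 else 1 with hs
  have hs2 : ∀ j, s j * s j = 1 := by
    intro j; by_cases hj : j = 0 <;> simp [hs, hj]
  have hss : Matrix.diagonal s * Matrix.diagonal s = 1 := by
    rw [Matrix.diagonal_mul_diagonal, ← Matrix.diagonal_one]
    exact congrArg Matrix.diagonal (funext hs2)
  have hPP' : P * P' = 1 := by
    rw [hP, hP', ← PEquiv.toMatrix_trans, ← Equiv.toPEquiv_trans]
    simp
  have hP'P : P' * P = 1 := by
    rw [hP, hP', ← PEquiv.toMatrix_trans, ← Equiv.toPEquiv_trans]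
    simp
  set C : Matrix (Fin (m + 2)) (Fin (m + 2)) R := P * Matrix.diagonal s with hC
  set C' : Matrix (Fin (m + 2)) (Fin (m + 2)) R := Matrix.diagonal s * P' with hC'
  have hCC' : C * C' = 1 := by
    rw [hC, hC', Matrix.mul_assoc, ← Matrix.mul_assoc (Matrix.diagonal s), hss,
      Matrix.one_mul, hPP']
  have hC'C : C' * C = 1 := by
    rw [hC', hC, Matrix.mul_assoc, ← Matrix.mul_assoc P', hP'P, Matrix.one_mul, hss]
  have hCunit : IsUnit C := ⟨⟨C, C', hCC', hC'C⟩, rfl⟩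
  -- diagonal pieces
  set ln : Fin (m + 2) := Fin.last (m + 1) with hln
  set d' : Fin (m + 2) → R := fun i => if i = ln then 0 else D i i with hd'
  set e : Fin (m + 2) → R := fun i => if i = ln then D i i else 0 with he
  have hDsum : D = Matrix.diagonal d' + Matrix.diagonal e := by
    ext i j
    by_cases hij : i = j
    · subst hij
      by_cases hi : i = ln <;> simp [Matrix.diagonal, hd', he, hi]
    · simp [Matrix.diagonal, hd', he, hij, hD hij]
  -- the nilpotent parts
  set M : Matrix (Fin (m + 2)) (Fin (m + 2)) R := Matrix.diagonal d' * C' with hM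
  set M' : Matrix (Fin (m + 2)) (Fin (m + 2)) R := Matrix.diagonal e * C' with hM'
  have hMdiag : M = Matrix.diagonal (fun i => d' i * s i) * P' := by
    rw [hM, hC', ← Matrix.mul_assoc, Matrix.diagonal_mul_diagonal]
  have hM'diag : M' = Matrix.diagonal (fun i => e i * s i) * P' := by
    rw [hM', hC', ← Matrix.mul_assoc, Matrix.diagonal_mul_diagonal]
  -- nonzero entry analysis
  have hPentry : ∀ i j : Fin (m + 2), P' i j ≠ (0 : R) → i = σ j := by
    intro i j hij
    by_contra hne
    apply hij
    have hne' : j ≠ σ.symm i := fun h => hne (by rw [h, Equiv.apply_symm_apply])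
    simp only [hP', PEquiv.toMatrix_apply, Equiv.toPEquiv_apply, Option.mem_some_iff]
    rw [if_neg (fun h => hne' h.symm)]
  have hσln : σ ln = 0 := by
    rw [hσ, finRotate_succ_apply, hln, Fin.last_add_one]
  have h0ln : (0 : Fin (m + 2)) ≠ ln := by
    rw [hln]
    intro h
    have := congrArg Fin.val h
    simp at this
  -- nilpotency of M
  have hMnil : M ^ (m + 2) = 0 := by
    apply aux_pow_eq_zero M (fun j => if j = ln then 0 else (j : ℕ) + 1)
    · intro i
      by_cases hi : i = ln
      · simp [hi]
      · have : (i : ℕ) < m + 1 := by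
          rcases Fin.lt_or_eq_of_le (Fin.le_last i) with h | h
          · exact h
          · exact absurd h hi
        simp [hi]; omega
    · intro i j hij
      rw [hMdiag, Matrix.diagonal_mul] at hij
      have h1 : d' i * s i ≠ 0 := fun h => hij (by rw [h, zero_mul])
      have h2 : P' i j ≠ 0 := fun h => hij (by rw [h, mul_zero])
      have hiσ : i = σ j := hPentry i j h2
      have hiln : i ≠ ln := by
        intro h
        apply h1
        rw [hd']
        simp [h]
      have hσj : σ j = j + 1 := by rw [hσ]; exact finRotate_succ_apply j
      by_cases hj : j = ln
      · -- then i = σ ln = 0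
        have hi0 : i = 0 := by rw [hiσ, hj, hσln]
        simp [hj, hi0, h0ln]
      · -- i = j + 1 and j ≠ last, so (i : ℕ) = j + 1
        have hval : (i : ℕ) = (j : ℕ) + 1 := by
          rw [hiσ, hσj, Fin.val_add_one_of_lt]
          exact Fin.lt_last_iff_ne_last.mpr hj
        simp [hiln, hj]
        omega
  have hM'nil : M' ^ (m + 2) = 0 := by
    apply aux_pow_eq_zero M' (fun j => if j = ln then 1 else 0)
    · intro j; by_cases hj : j = ln <;> simp [hj]
    · intro i j hij
      rw [hM'diag, Matrix.diagonal_mul] at hij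
      have h1 : e i * s i ≠ 0 := fun h => hij (by rw [h, zero_mul])
      have h2 : P' i j ≠ 0 := fun h => hij (by rw [h, mul_zero])
      have hiσ : i = σ j := hPentry i j h2
      have hiln : i = ln := by
        by_contra h
        apply h1
        rw [he]
        simp [h]
      have hσj : σ j = j + 1 := by rw [hσ]; exact finRotate_succ_apply j
      have hjln : j ≠ ln := by
        intro h
        rw [h, hσln] at hiσ
        exact h0ln (hiσ ▸ hiln)
      simp [hiln, hjln]
  -- the units
  have hA : IsUnit (1 + M) := IsNilpotent.isUnit_one_add ⟨m + 2, hMnil⟩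
  have hB : IsUnit (M' - 1) := by
    have : IsUnit (1 - M') := IsNilpotent.isUnit_one_sub ⟨m + 2, hM'nil⟩
    have := this.neg
    rwa [neg_sub] at this
  refine ⟨(1 + M) * C, (M' - 1) * C, hA.mul hCunit, hB.mul hCunit, ?_⟩
  have e1 : (1 + M) * C = C + Matrix.diagonal d' := by
    rw [Matrix.add_mul, Matrix.one_mul, hM, Matrix.mul_assoc, hC'C, Matrix.mul_one]
  have e2 : (M' - 1) * C = Matrix.diagonal e - C := by
    rw [Matrix.sub_mul, Matrix.one_mul, hM', Matrix.mul_assoc, hC'C, Matrix.mul_one]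
  rw [e1, e2, hDsum]
  abel
end

section
/- If $R$ is a ring such that every square matrix over $R$ admits diagonal reduction (i.e., $R$ is an elementary divisor ring), then for every $n \geq 2$, every element of the matrix ring $\mathbb{M}_n(R)$ is the sum of two units. -/
/-!
Diagonal reduction brings every matrix to a diagonal one, and being a sum of two units is
preserved under multiplication by units on both sides. For a diagonal `D` let `C` be the
cyclic permutation matrix and split `D = S + D'`, with `S` keeping only the last diagonal entry of `D`.
Then `D = (C + S) + (D' - C)`. Multiplying by `C⁻¹` moves the entries of a diagonal matrix one
step down cyclically, so `C⁻¹ S` is strictly upper triangular (here `n ≥ 2` is needed) and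
`C⁻¹ D'` is strictly lower triangular. Both summands are therefore of the form
`C * (1 + nilpotent)`, up to sign.
-/

open Matrix Equiv

namespace Matrix

variable {m R : Type*}

def StrictBlockTriangular [Zero R] {α : Type*} [LE α] (M : Matrix m m R) (b : m → α) : Prop :=
  ∀ ⦃i j⦄, b j ≤ b i → M i j = 0

variable [Fintype m] [DecidableEq m] [Semiring R]

theorem StrictBlockTriangular.pow_eq_zero {N : ℕ} {M : Matrix m m R} {b : m → Fin N}
    (hM : M.StrictBlockTriangular b) : M ^ N = 0 := by
  have pow_apply_eq_zero : ∀ k i j, (b j : ℕ) < b i + k → (M ^ k) i j = 0 := by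
    intro k
    induction k with
    | zero =>
      intro i j hij
      exact one_apply_ne fun h => by subst h; omega
    | succ k ih =>
      intro i j hij
      rw [pow_succ, mul_apply]
      refine Finset.sum_eq_zero fun l _ => ?_
      by_cases hl : (b l : ℕ) < b i + k
      · rw [ih i l hl, zero_mul]
      · rw [hM (Fin.le_iff_val_le_val.2 (by omega)), mul_zero]
  ext i j
  exact pow_apply_eq_zero N i j (by omega)

theorem StrictBlockTriangular.isNilpotent {N : ℕ} {M : Matrix m m R} {b : m → Fin N}
    (hM : M.StrictBlockTriangular b) : IsNilpotent M :=
  ⟨N, hM.pow_eq_zero⟩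

end Matrix

theorem isUnit_add_of_isNilpotent_mul {A : Type*} [Ring A] {u v x : A} (huv : u * v = 1)
    (hvu : v * u = 1) (hx : IsNilpotent (v * x)) : IsUnit (u + x) := by
  have factor : u + x = u * (1 + v * x) := by rw [mul_add, mul_one, ← mul_assoc, huv, one_mul]
  rw [factor]
  exact (Units.mk u v huv hvu).isUnit.mul hx.isUnit_one_add

theorem exists_isUnit_add_of_mul_mul {A : Type*} [Semiring A] {p q a : A} (hp : IsUnit p)
    (hq : IsUnit q) (h : ∃ u v : A, IsUnit u ∧ IsUnit v ∧ p * a * q = u + v) :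
    ∃ u v : A, IsUnit u ∧ IsUnit v ∧ a = u + v := by
  obtain ⟨p, rfl⟩ := hp
  obtain ⟨q, rfl⟩ := hq
  obtain ⟨u, v, hu, hv, huv⟩ := h
  refine ⟨↑p⁻¹ * u * ↑q⁻¹, ↑p⁻¹ * v * ↑q⁻¹, (p⁻¹.isUnit.mul hu).mul q⁻¹.isUnit,
    (p⁻¹.isUnit.mul hv).mul q⁻¹.isUnit, ?_⟩
  rw [← add_mul, ← mul_add, ← huv]
  simp [mul_assoc]

namespace Matrix

theorem isUnit_permMatrix_add {m R : Type*} [Fintype m] [DecidableEq m] [Ring R]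
    (σ : Perm m) {X : Matrix m m R} (hX : IsNilpotent (X.submatrix σ.symm id)) :
    IsUnit (σ.permMatrix R + X) := by
  refine isUnit_add_of_isNilpotent_mul (v := σ⁻¹.permMatrix R) ?_ ?_ ?_
  · rw [← permMatrix_mul, inv_mul_cancel, permMatrix_one]
  · rw [← permMatrix_mul, mul_inv_cancel, permMatrix_one]
  · rwa [PEquiv.toMatrix_toPEquiv_mul]

variable {n : ℕ} {R : Type*} [Zero R]

theorem diagonal_submatrix_finRotate_symm_apply (e : Fin (n + 1) → R) (i j : Fin (n + 1)) :
    (diagonal e).submatrix (finRotate (n + 1)).symm id i j = if i = j + 1 then e j else 0 := by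
  simp only [submatrix_apply, diagonal_apply, id, Equiv.symm_apply_eq, finRotate_apply]
  split_ifs with h <;> simp_all

theorem strictBlockTriangular_rev_diagonal_submatrix_finRotate_symm {e : Fin (n + 1) → R}
    (he : e (Fin.last n) = 0) :
    ((diagonal e).submatrix (finRotate (n + 1)).symm id).StrictBlockTriangular Fin.rev := by
  intro i j hji
  rw [diagonal_submatrix_finRotate_symm_apply]
  split_ifs with hij
  · subst hij
    by_cases hj : j = Fin.last n
    · rw [hj, he]
    · exact absurd (Fin.rev_le_rev.1 hji)
        (not_le.2 (Fin.lt_add_one_iff.2 (Fin.lt_last_iff_ne_last.2 hj)))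
  · rfl

theorem strictBlockTriangular_id_diagonal_submatrix_finRotate_symm_single (c : R) :
    ((diagonal (Pi.single (Fin.last (n + 1)) c)).submatrix (finRotate (n + 2)).symm id
      ).StrictBlockTriangular id := by
  intro i j hji
  rw [diagonal_submatrix_finRotate_symm_apply]
  split_ifs with hij
  · subst hij
    by_cases hj : j = Fin.last (n + 1)
    · subst hj
      simp at hji
    · exact Pi.single_eq_of_ne hj _
  · rfl

theorem exists_isUnit_add_eq_diagonal {R : Type*} [Ring R] (d : Fin (n + 2) → R) :
    ∃ U V : Matrix (Fin (n + 2)) (Fin (n + 2)) R, IsUnit U ∧ IsUnit V ∧ diagonal d = U + V := by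
  set C := (finRotate (n + 2)).permMatrix R
  set c := d (Fin.last (n + 1))
  refine ⟨C + diagonal (Pi.single (Fin.last (n + 1)) c),
    -(C + diagonal (-Function.update d (Fin.last (n + 1)) 0)), ?_, ?_, ?_⟩
  · exact isUnit_permMatrix_add _
      (strictBlockTriangular_id_diagonal_submatrix_finRotate_symm_single c).isNilpotent
  · exact (isUnit_permMatrix_add _
      (strictBlockTriangular_rev_diagonal_submatrix_finRotate_symm (by simp)).isNilpotent).neg
  · ext i j
    by_cases hi : i = Fin.last (n + 1) <;> simp [diagonal_apply, hi, c]

end Matrix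

/-- If `R` is an elementary divisor ring (every square matrix admits diagonal reduction),
then for every `n ≥ 2`, every element of `Matrix (Fin n) (Fin n) R` is a sum of two units. -/
theorem elementary_divisor_ring_matrix_sum_two_units (R : Type*) [Ring R]
    (hEDR : ∀ (m : ℕ) (A : Matrix (Fin m) (Fin m) R),
      ∃ P Q : Matrix (Fin m) (Fin m) R, IsUnit P ∧ IsUnit Q ∧ (P * A * Q).IsDiag)
    (n : ℕ) (hn : 2 ≤ n) (A : Matrix (Fin n) (Fin n) R) :
    ∃ U V : Matrix (Fin n) (Fin n) R, IsUnit U ∧ IsUnit V ∧ A = U + V := by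
  obtain ⟨k, rfl⟩ := Nat.exists_eq_add_of_le' hn
  obtain ⟨P, Q, hP, hQ, hPAQ⟩ := hEDR _ A
  refine exists_isUnit_add_of_mul_mul hP hQ ?_
  rw [← hPAQ.diagonal_diag]
  exact exists_isUnit_add_eq_diagonal _
end

section
/- If $I$ is a two-sided ideal of a ring $R$ such that every element of $I$ is von Neumann regular in $R$ (for each $x \in I$ there is $y \in R$ with $x = xyx$) and the quotient ring $R/I$ is von Neumann regular, then $R$ is von Neumann regular. -/
/-- If `I` is a two-sided ideal of `R` such that every element of `I` is von Neumann regular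
in `R`, and `R/I` is von Neumann regular, then `R` is von Neumann regular. -/
theorem vonNeumannRegular_of_ideal_and_quotient (R : Type*) [Ring R] (I : TwoSidedIdeal R)
    (hI : ∀ x ∈ I, ∃ y : R, x = x * y * x)
    (hQ : ∀ a : I.ringCon.Quotient, ∃ b : I.ringCon.Quotient, a = a * b * a) :
    ∀ a : R, ∃ b : R, a = a * b * a := by
  intro a
  obtain ⟨b', hb'⟩ := hQ (I.ringCon.mk' a)
  obtain ⟨b, rfl⟩ := I.ringCon.mk'_surjective b'
  have h1 : I.ringCon a (a * b * a) := by
    have : (I.ringCon.mk' a : I.ringCon.Quotient) = I.ringCon.mk' (a * b * a) := by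
      simpa using hb'
    exact I.ringCon.eq.mp this
  rw [I.rel_iff] at h1
  obtain ⟨y, hy⟩ := hI _ h1
  refine ⟨b + (1 - b * a) * y * (1 - a * b), ?_⟩
  have key : a * (b + (1 - b * a) * y * (1 - a * b)) * a
      = a * b * a + (a - a * b * a) * y * (a - a * b * a) := by noncomm_ring
  rw [key, ← hy]
  noncomm_ring
end

section
/- In an abelian von Neumann regular ring (a von Neumann regular ring in which every idempotent is central), every element $x$ can be written as $x = xux$ for some unit $u$; that is, abelian regular rings are unit regular. -/
/-- Abelian von Neumann regular rings are unit regular: every element `x` satisfies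
`x = x * u * x` for some unit `u`. -/
theorem abelian_regular_is_unit_regular (R : Type*) [Ring R]
    (hreg : ∀ a : R, ∃ b : R, a = a * b * a)
    (habel : ∀ e : R, e * e = e → ∀ x : R, e * x = x * e) :
    ∀ x : R, ∃ u : Rˣ, x = x * (u : R) * x := by
  intro x
  obtain ⟨b, hb⟩ := hreg x
  obtain ⟨c, hc⟩ : ∃ c : R, c = b * x * b := ⟨_, rfl⟩
  have hxcx : x * c * x = x := by
    rw [hc]
    calc x * (b * x * b) * x = (x * b * x) * (b * x) := by noncomm_ring
      _ = x * (b * x) := by rw [← hb]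
      _ = x * b * x := by noncomm_ring
      _ = x := hb.symm
  have hcxc : c * x * c = c := by
    rw [hc]
    calc b * x * b * x * (b * x * b) = b * (x * b * x) * b * (x * b) := by noncomm_ring
      _ = b * x * b * (x * b) := by rw [← hb]
      _ = b * (x * b * x) * b := by noncomm_ring
      _ = b * x * b := by rw [← hb]
  obtain ⟨e, he⟩ : ∃ e : R, e = x * c := ⟨_, rfl⟩
  obtain ⟨f, hf⟩ : ∃ f : R, f = c * x := ⟨_, rfl⟩
  have hee : e * e = e := by
    rw [he]
    calc x * c * (x * c) = (x * c * x) * c := by noncomm_ring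
      _ = x * c := by rw [hxcx]
  have hff : f * f = f := by
    rw [hf]
    calc c * x * (c * x) = (c * x * c) * x := by noncomm_ring
      _ = c * x := by rw [hcxc]
  have hecen := habel e hee
  have hfcen := habel f hff
  have hx1 : x * x * c = x := by
    have h := hecen x
    rw [he] at h
    calc x * x * c = x * (x * c) := by noncomm_ring
      _ = (x * c) * x := h.symm
      _ = x := hxcx
  have hef : e = f := by
    have h1 : f * e = f := by
      rw [he, hf]
      calc c * x * (x * c) = c * (x * x * c) := by noncomm_ring
        _ = c * x := by rw [hx1]
    have h2 : e * f = e := by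
      have hbf : c * f = f * c := (hfcen c).symm
      rw [hf] at hbf
      rw [he, hf]
      calc x * c * (c * x) = x * (c * (c * x)) := by noncomm_ring
        _ = x * ((c * x) * c) := by rw [hbf]
        _ = (x * c * x) * c := by noncomm_ring
        _ = x * c := by rw [hxcx]
    rw [← h2, hecen f, h1]
  have hce : c * e = c := by
    rw [he]
    calc c * (x * c) = c * x * c := by noncomm_ring
      _ = c := hcxc
  have hec : e * c = c := by rw [hecen c, hce]
  have hxe : x * e = x := by
    rw [← hecen x, he]
    exact hxcx
  have hex : e * x = x := by rw [hecen x, hxe]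
  have huv : (c + 1 - e) * (x + 1 - e) = 1 := by
    have expand : (c + 1 - e) * (x + 1 - e) =
        c * x + (c - c * e) + (x - e * x) + (1 - e - e + e * e) := by noncomm_ring
    rw [expand, hee, hce, hex, ← hf, ← hef]
    abel
  have hvu : (x + 1 - e) * (c + 1 - e) = 1 := by
    have expand : (x + 1 - e) * (c + 1 - e) =
        x * c + (x - x * e) + (c - e * c) + (1 - e - e + e * e) := by noncomm_ring
    rw [expand, hee, hxe, hec, ← he]
    abel
  refine ⟨⟨c + 1 - e, x + 1 - e, huv, hvu⟩, ?_⟩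
  show x = x * (c + 1 - e) * x
  have expand : x * (c + 1 - e) * x = (x * c * x) + (x * x) - (x * e * x) := by noncomm_ring
  rw [expand, hxcx, show x * e * x = (x * e) * x from by noncomm_ring, hxe]
  abel
end

section
/- Let $u: M \to X$ be an $\mathcal{X}$-envelope of a module $M$, and let $f \in \mathrm{End}(M)$. If $g, g' \in \mathrm{End}(X)$ satisfy $g \circ u = u \circ f = g' \circ u$, then $g - g'$ lies in the Jacobson radical of $\mathrm{End}(X)$. -/
/-- If `u : M → X` has the envelope property (any endomorphism `h` of `X` with `h ∘ u = u`
is a unit of `End X`) and `g ∘ u = u ∘ f = g' ∘ u`, then `g - g' ∈ J(End X)`. -/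
theorem envelope_extension_unique_mod_jacobson (R : Type*) [Ring R]
    (M X : Type*) [AddCommGroup M] [AddCommGroup X] [Module R M] [Module R X]
    (u : M →ₗ[R] X)
    (henv : ∀ h : X →ₗ[R] X, h ∘ₗ u = u → IsUnit (h : Module.End R X))
    (f : M →ₗ[R] M) (g g' : X →ₗ[R] X)
    (hg : g ∘ₗ u = u ∘ₗ f) (hg' : g' ∘ₗ u = u ∘ₗ f) :
    (g - g' : Module.End R X) ∈ Ideal.jacobson (⊥ : Ideal (Module.End R X)) := by
  set d : Module.End R X := g - g' with hd
  have hdu : ∀ m : M, d (u m) = 0 := by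
    intro m
    have h1 := congrArg (fun t => t m) hg
    have h2 := congrArg (fun t => t m) hg'
    simp only [LinearMap.comp_apply] at h1 h2
    simp [hd, h1, h2]
  rw [Ideal.mem_jacobson_iff]
  intro y
  have hu : IsUnit (1 + y * d) := by
    apply henv
    ext m
    simp [Module.End.mul_apply, hdu m]
  obtain ⟨z, hz⟩ := hu.exists_left_inv
  refine ⟨z, ?_⟩
  rw [Ideal.mem_bot]
  have : z * y * d + z - 1 = z * (1 + y * d) - 1 := by noncomm_ring
  rw [this, hz, sub_self]
end

section
/- Let $u: M \to X$ be a module homomorphism such that every endomorphism $h$ of $X$ with $h \circ u = u$ is an automorphism, and suppose $M$ is $\mathcal{X}$-automorphism-invariant via $u$ (every automorphism $g$ of $X$ satisfies $g \circ u = u \circ f$ for some $f \in \mathrm{End}(M)$). Then for every $j$ in the Jacobson radical of $\mathrm{End}(X)$, there exists $k \in \mathrm{End}(M)$ with $u \circ k = j \circ u$ and such that any $g \in \mathrm{End}(X)$ with $g \circ u = u \circ k$ lies in $J(\mathrm{End}(X))$. -/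
set_option maxHeartbeats 1000000

/-- In any ring, if `x` is in the Jacobson radical then `1 + y * x` is a unit for every `y`. -/
lemma isUnit_one_add_mul_of_mem_jacobson {S : Type*} [Ring S] {x : S}
    (hx : x ∈ Ideal.jacobson (⊥ : Ideal S)) (y : S) : IsUnit (1 + y * x) := by
  obtain ⟨z, hz⟩ := Ideal.mem_jacobson_iff.mp hx y
  rw [Ideal.mem_bot] at hz
  have hz' : z * y * x + z = 1 := by rwa [sub_eq_zero] at hz
  have hz1 : z * (y * x + 1) = 1 := by rw [mul_add, mul_one, ← mul_assoc]; exact hz'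
  have hw : z * y * x ∈ Ideal.jacobson (⊥ : Ideal S) := Ideal.mul_mem_left _ _ hx
  obtain ⟨t, ht⟩ := Ideal.mem_jacobson_iff.mp hw (-1)
  rw [Ideal.mem_bot] at ht
  have ht' : t * -1 * (z * y * x) + t = 1 := by rwa [sub_eq_zero] at ht
  have hzz : z = 1 - z * y * x := by rw [eq_sub_iff_add_eq, add_comm]; exact hz'
  have ht1 : t * z = 1 := by
    have e : t * z = t * -1 * (z * y * x) + t := by
      conv_lhs => rw [hzz]
      noncomm_ring
    rw [e, ht']
  have hteq : t = y * x + 1 := by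
    calc t = t * (z * (y * x + 1)) := by rw [hz1, mul_one]
      _ = (t * z) * (y * x + 1) := by rw [mul_assoc]
      _ = y * x + 1 := by rw [ht1, one_mul]
  have : IsUnit (y * x + 1) := by
    refine isUnit_iff_exists.mpr ⟨z, ?_, hz1⟩
    rw [← hteq]; exact ht1
  rwa [add_comm] at this

/-- Conversely-flavored helper: an element all of whose `1 + y * x` are units is in
the Jacobson radical. -/
lemma mem_jacobson_of_forall_isUnit {S : Type*} [Ring S] {x : S}
    (h : ∀ y, IsUnit (1 + y * x)) : x ∈ Ideal.jacobson (⊥ : Ideal S) := by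
  rw [Ideal.mem_jacobson_iff]
  intro y
  obtain ⟨v, _, hv2⟩ := isUnit_iff_exists.mp (h y)
  refine ⟨v, ?_⟩
  rw [Ideal.mem_bot]
  have : v * y * x + v - 1 = v * (1 + y * x) - 1 := by noncomm_ring
  rw [this, hv2, sub_self]

/-- If `u : M → X` has the envelope property and `M` is automorphism-invariant via `u`,
then every `j ∈ J(End X)` is "covered": there is `k ∈ End M` with `u ∘ k = j ∘ u`, and
moreover any `g ∈ End X` with `g ∘ u = u ∘ k` lies in `J(End X)`. -/
theorem jacobson_lifts_to_kernel (R : Type*) [Ring R]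
    (M X : Type*) [AddCommGroup M] [AddCommGroup X] [Module R M] [Module R X]
    (u : M →ₗ[R] X)
    (henv : ∀ h : X →ₗ[R] X, h ∘ₗ u = u → IsUnit (h : Module.End R X))
    (hinv : ∀ g : X →ₗ[R] X, IsUnit (g : Module.End R X) →
      ∃ f : M →ₗ[R] M, g ∘ₗ u = u ∘ₗ f) :
    ∀ j : X →ₗ[R] X, (j : Module.End R X) ∈ Ideal.jacobson (⊥ : Ideal (Module.End R X)) →
      ∃ k : M →ₗ[R] M, u ∘ₗ k = j ∘ₗ u ∧
        ∀ g : X →ₗ[R] X, g ∘ₗ u = u ∘ₗ k →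
          (g : Module.End R X) ∈ Ideal.jacobson (⊥ : Ideal (Module.End R X)) := by
  intro j hj
  -- `1 - j` is a unit
  have hu : IsUnit ((1 : Module.End R X) - j) := by
    have h := isUnit_one_add_mul_of_mem_jacobson hj (-1)
    rwa [neg_one_mul, ← sub_eq_add_neg] at h
  obtain ⟨f, hf⟩ := hinv ((1 : Module.End R X) - j) hu
  have hk : u ∘ₗ (LinearMap.id - f) = j ∘ₗ u := by
    ext m
    have h := LinearMap.congr_fun hf m
    simp only [LinearMap.coe_comp, Function.comp_apply, LinearMap.sub_apply,
      LinearMap.id_apply, Module.End.one_apply] at h ⊢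
    rw [map_sub, ← h]
    abel
  refine ⟨LinearMap.id - f, hk, ?_⟩
  intro g hg
  have hgu : g ∘ₗ u = j ∘ₗ u := by rw [hg, hk]
  have hd : (g - j) ∘ₗ u = 0 := by
    rw [LinearMap.sub_comp, hgu, sub_self]
  apply mem_jacobson_of_forall_isUnit
  intro y
  -- `1 + y * (g - j)` fixes `u`, hence is a unit by the envelope property
  have hw : IsUnit ((1 : Module.End R X) + y * (g - j)) := by
    apply henv
    ext m
    have h0 := LinearMap.congr_fun hd m
    simp only [LinearMap.coe_comp, Function.comp_apply, LinearMap.sub_apply,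
      LinearMap.zero_apply] at h0
    simp [Module.End.mul_apply, Module.End.one_apply, LinearMap.add_apply,
      LinearMap.sub_apply, h0]
  obtain ⟨wi, hwi1, hwi2⟩ := isUnit_iff_exists.mp hw
  have h2 : IsUnit ((1 : Module.End R X) + (wi * y) * j) :=
    isUnit_one_add_mul_of_mem_jacobson hj (wi * y)
  have key : ((1 : Module.End R X) + y * (g - j)) * (1 + (wi * y) * j) =
      (1 : Module.End R X) + y * g := by
    calc ((1 : Module.End R X) + y * (g - j)) * (1 + (wi * y) * j)
        = (1 + y * (g - j)) + ((1 + y * (g - j)) * wi) * (y * j) := by noncomm_ring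
      _ = (1 + y * (g - j)) + y * j := by rw [hwi1, one_mul]
      _ = 1 + y * g := by noncomm_ring
  rw [← key]
  exact hw.mul h2
end

section
/- Let $u: M \to X$ be an injective module homomorphism such that every endomorphism $h$ of $X$ with $h \circ u = u$ is an automorphism, and suppose every automorphism $g$ of $X$ satisfies $g \circ u = u \circ f$ for some $f \in \mathrm{End}(M)$. Then each such $f$ is necessarily an automorphism of $M$. -/
/-- If `u : M → X` is injective, has the envelope property, and every automorphism of `X`
descends along `u`, then any `f ∈ End M` satisfying `g ∘ u = u ∘ f` for a unit `g` is
itself a unit of `End M`. -/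
theorem descended_automorphism_is_automorphism (R : Type*) [Ring R]
    (M X : Type*) [AddCommGroup M] [AddCommGroup X] [Module R M] [Module R X]
    (u : M →ₗ[R] X) (hu : Function.Injective u)
    (henv : ∀ h : X →ₗ[R] X, h ∘ₗ u = u → IsUnit (h : Module.End R X))
    (hinv : ∀ g : X →ₗ[R] X, IsUnit (g : Module.End R X) →
      ∃ f : M →ₗ[R] M, g ∘ₗ u = u ∘ₗ f) :
    ∀ (g : X →ₗ[R] X), IsUnit (g : Module.End R X) →
      ∀ f : M →ₗ[R] M, g ∘ₗ u = u ∘ₗ f → IsUnit (f : Module.End R M) := by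
  intro g hg f hgf
  obtain ⟨⟨g₁, g₂, h12, h21⟩, rfl⟩ := hg
  have hg2 : IsUnit (g₂ : Module.End R X) := ⟨⟨g₂, g₁, h21, h12⟩, rfl⟩
  obtain ⟨f', hf'⟩ := hinv g₂ hg2
  have key : ∀ (a b : X →ₗ[R] X) (c d : M →ₗ[R] M),
      a ∘ₗ u = u ∘ₗ c → b ∘ₗ u = u ∘ₗ d → a ∘ₗ b = LinearMap.id →
      c ∘ₗ d = LinearMap.id := by
    intro a b c d hac hbd hab
    apply LinearMap.ext
    intro m
    apply hu
    have : (a ∘ₗ b ∘ₗ u) m = (u ∘ₗ c ∘ₗ d) m := by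
      simp only [LinearMap.comp_apply]
      rw [← LinearMap.comp_apply b u, hbd, LinearMap.comp_apply,
        ← LinearMap.comp_apply a u, hac]
      rfl
    rw [← LinearMap.comp_assoc, hab] at this
    simpa using this.symm
  have h1 : (g₁ : X →ₗ[R] X) ∘ₗ g₂ = LinearMap.id := h12
  have h2 : (g₂ : X →ₗ[R] X) ∘ₗ g₁ = LinearMap.id := h21
  exact ⟨⟨f, f', key g₁ g₂ f f' hgf hf' h1, key g₂ g₁ f' f hf' hgf h2⟩, rfl⟩
end

section
/- Let $u: M \to X$ be an injective homomorphism with the envelope property and suppose $M$ is automorphism-invariant in $X$ via $u$. Define $K = \{ f \in \mathrm{End}(M) : \exists g \in J(\mathrm{End}(X)),\ g \circ u = u \circ f \}$. Then every element of $K$ is in the Jacobson radical of $\mathrm{End}(M)$; i.e., for each $f \in K$, $1 - f$ is a unit of $\mathrm{End}(M)$. -/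
/-- In any (possibly noncommutative) ring, `g ∈ J(A)` implies `1 - g` is a unit. -/
lemma isUnit_one_sub_of_mem_jacobson_bot' {A : Type*} [Ring A] {g : A}
    (h : g ∈ Ideal.jacobson (⊥ : Ideal A)) : IsUnit (1 - g) := by
  have hneg : (1 - g) - 1 ∈ Ideal.jacobson (⊥ : Ideal A) := by
    simpa using (Ideal.jacobson (⊥ : Ideal A)).neg_mem h
  obtain ⟨s, hs⟩ := Ideal.exists_mul_sub_mem_of_sub_one_mem_jacobson (1 - g) hneg
  rw [Ideal.mem_bot, sub_eq_zero] at hs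
  have hsg : s - 1 ∈ Ideal.jacobson (⊥ : Ideal A) := by
    have : s - 1 = s * g := by
      rw [mul_sub, mul_one, sub_eq_iff_eq_add] at hs
      exact sub_eq_of_eq_add' hs
    rw [this]
    exact Ideal.mul_mem_left _ _ h
  obtain ⟨t, ht⟩ := Ideal.exists_mul_sub_mem_of_sub_one_mem_jacobson s hsg
  rw [Ideal.mem_bot, sub_eq_zero] at ht
  have hts : t = 1 - g := by
    calc t = t * (s * (1 - g)) := by rw [hs, mul_one]
    _ = (t * s) * (1 - g) := by rw [mul_assoc]
    _ = 1 - g := by rw [ht, one_mul]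
  refine ⟨⟨1 - g, s, ?_, hs⟩, rfl⟩
  rw [← hts]; exact ht

/-- If `u : M → X` is an injective envelope-like map and `M` is automorphism-invariant via
`u`, then any `f ∈ End M` induced by some `g ∈ J(End X)` satisfies that `1 - f` is a unit. -/
theorem kernel_contained_in_jacobson (R : Type*) [Ring R]
    (M X : Type*) [AddCommGroup M] [AddCommGroup X] [Module R M] [Module R X]
    (u : M →ₗ[R] X) (hu : Function.Injective u)
    (henv : ∀ h : X →ₗ[R] X, h ∘ₗ u = u → IsUnit (h : Module.End R X))
    (hinv : ∀ g : X →ₗ[R] X, IsUnit (g : Module.End R X) →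
      ∃ f : M →ₗ[R] M, g ∘ₗ u = u ∘ₗ f) :
    ∀ f : M →ₗ[R] M,
      (∃ g : X →ₗ[R] X, (g : Module.End R X) ∈ Ideal.jacobson (⊥ : Ideal (Module.End R X)) ∧
        g ∘ₗ u = u ∘ₗ f) →
      IsUnit (1 - f : Module.End R M) := by
  rintro f ⟨g, hg, hgu⟩
  have hU : IsUnit ((1 - g : X →ₗ[R] X) : Module.End R X) :=
    isUnit_one_sub_of_mem_jacobson_bot' hg
  set v : (Module.End R X)ˣ := hU.unit with hv
  obtain ⟨f₂, hf₂⟩ := hinv ((v⁻¹ : (Module.End R X)ˣ) : Module.End R X) (Units.isUnit _)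
  -- key: u ∘ (1 - f) = (1 - g) ∘ u
  have hcomm : u ∘ₗ (1 - f) = (1 - g) ∘ₗ u := by
    ext x
    have := LinearMap.congr_fun hgu x
    simp only [LinearMap.comp_apply, LinearMap.sub_apply, Module.End.one_apply, map_sub] at *
    rw [← this]
  have key : ∀ a : M →ₗ[R] M, u ∘ₗ a = u → a = 1 := fun a ha =>
    LinearMap.ext fun x => hu (by simpa using LinearMap.congr_fun ha x)
  have hv1 : ((v : Module.End R X) : X →ₗ[R] X) = 1 - g := rfl
  have hvv : (v : Module.End R X) ∘ₗ ((v⁻¹ : (Module.End R X)ˣ) : Module.End R X) = 1 := by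
    exact v.mul_inv
  have hvv' : ((v⁻¹ : (Module.End R X)ˣ) : Module.End R X) ∘ₗ (v : Module.End R X) = 1 := by
    exact v.inv_mul
  have h1 : (1 - f) ∘ₗ f₂ = 1 := by
    apply key
    calc u ∘ₗ ((1 - f) ∘ₗ f₂) = (u ∘ₗ (1 - f)) ∘ₗ f₂ := by rw [LinearMap.comp_assoc]
    _ = ((1 - g) ∘ₗ u) ∘ₗ f₂ := by rw [hcomm]
    _ = (1 - g) ∘ₗ (u ∘ₗ f₂) := by rw [LinearMap.comp_assoc]
    _ = (1 - g) ∘ₗ (((v⁻¹ : (Module.End R X)ˣ) : Module.End R X) ∘ₗ u) := by rw [← hf₂]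
    _ = ((1 - g) ∘ₗ ((v⁻¹ : (Module.End R X)ˣ) : Module.End R X)) ∘ₗ u := by
        rw [LinearMap.comp_assoc]
    _ = u := by rw [← hv1, hvv]; rfl
  have h2 : f₂ ∘ₗ (1 - f) = 1 := by
    apply key
    calc u ∘ₗ (f₂ ∘ₗ (1 - f)) = (u ∘ₗ f₂) ∘ₗ (1 - f) := by rw [LinearMap.comp_assoc]
    _ = (((v⁻¹ : (Module.End R X)ˣ) : Module.End R X) ∘ₗ u) ∘ₗ (1 - f) := by rw [← hf₂]
    _ = ((v⁻¹ : (Module.End R X)ˣ) : Module.End R X) ∘ₗ (u ∘ₗ (1 - f)) := by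
        rw [LinearMap.comp_assoc]
    _ = ((v⁻¹ : (Module.End R X)ˣ) : Module.End R X) ∘ₗ ((1 - g) ∘ₗ u) := by rw [hcomm]
    _ = (((v⁻¹ : (Module.End R X)ˣ) : Module.End R X) ∘ₗ (1 - g)) ∘ₗ u := by
        rw [LinearMap.comp_assoc]
    _ = u := by rw [← hv1, hvv']; rfl
  exact ⟨⟨1 - f, f₂, by simpa [Module.End.mul_eq_comp] using h1,
    by simpa [Module.End.mul_eq_comp] using h2⟩, rfl⟩
end

section
/- Let $p: X \to M$ be a surjective module homomorphism such that every endomorphism $h$ of $X$ with $p \circ h = p$ is an automorphism. If $f \in \mathrm{End}(M)$ and $g, g' \in \mathrm{End}(X)$ satisfy $p \circ g = f \circ p = p \circ g'$, then $g - g'$ lies in the Jacobson radical of $\mathrm{End}(X)$. -/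
private lemma isUnit_one_add_mul_swap {A : Type*} [Ring A] {a b : A}
    (h : IsUnit (1 + a * b)) : IsUnit (1 + b * a) := by
  obtain ⟨u, hu⟩ := h
  have h1 : (1 + a * b) * (u⁻¹ : Aˣ) = 1 := by rw [← hu]; exact u.mul_inv
  have h2 : ((u⁻¹ : Aˣ) : A) * (1 + a * b) = 1 := by rw [← hu]; exact u.inv_mul
  refine isUnit_iff_exists.mpr ⟨1 - b * (u⁻¹ : Aˣ) * a, ?_, ?_⟩
  · have : (1 + b * a) * (1 - b * (u⁻¹ : Aˣ) * a)
        = 1 + b * a - b * ((1 + a * b) * (u⁻¹ : Aˣ)) * a := by noncomm_ring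
    rw [this, h1]; noncomm_ring
  · have : (1 - b * (u⁻¹ : Aˣ) * a) * (1 + b * a)
        = 1 + b * a - b * (((u⁻¹ : Aˣ) : A) * (1 + a * b)) * a := by noncomm_ring
    rw [this, h2]; noncomm_ring

/-- If `p : X → M` is surjective with the cover property (any `h ∈ End X` with `p ∘ h = p`
is a unit), and `p ∘ g = f ∘ p = p ∘ g'`, then `g - g' ∈ J(End X)`. -/
theorem cover_lift_unique_mod_jacobson (R : Type*) [Ring R]
    (M X : Type*) [AddCommGroup M] [AddCommGroup X] [Module R M] [Module R X]
    (p : X →ₗ[R] M) (hp : Function.Surjective p)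
    (hcov : ∀ h : X →ₗ[R] X, p ∘ₗ h = p → IsUnit (h : Module.End R X))
    (f : M →ₗ[R] M) (g g' : X →ₗ[R] X)
    (hg : p ∘ₗ g = f ∘ₗ p) (hg' : p ∘ₗ g' = f ∘ₗ p) :
    (g - g' : Module.End R X) ∈ Ideal.jacobson (⊥ : Ideal (Module.End R X)) := by
  set k : Module.End R X := g - g' with hk
  have h0 : ∀ z : X, p (k z) = 0 := by
    intro z
    have := congrFun (congrArg (fun l : X →ₗ[R] M => (l : X → M)) (hg.trans hg'.symm)) z
    simp only [LinearMap.coe_comp, Function.comp_apply] at this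
    simp [hk, this]
  rw [Ideal.mem_jacobson_iff]
  intro y
  have hu : IsUnit (1 + k * y) := by
    apply hcov
    ext x
    simp [Module.End.mul_apply, h0]
  have hu' : IsUnit (1 + y * k) := isUnit_one_add_mul_swap hu
  obtain ⟨v, hv⟩ := hu'
  refine ⟨(v⁻¹ : _ˣ), ?_⟩
  have : ((v⁻¹ : _ˣ) : Module.End R X) * (1 + y * k) = 1 := by rw [← hv]; exact v.inv_mul
  rw [Ideal.mem_bot]
  rw [mul_add, mul_one] at this
  rw [← mul_assoc] at this
  rw [sub_eq_zero, add_comm]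
  exact this
end

section
/- Let $p: X \to M$ be a surjective homomorphism with the cover property (any $h \in \mathrm{End}(X)$ with $p \circ h = p$ is an automorphism), such that every automorphism $g$ of $X$ descends: there exists $f \in \mathrm{End}(M)$ with $p \circ g = f \circ p$. Define $K = \{ f \in \mathrm{End}(M) : \exists g \in J(\mathrm{End}(X)),\ p \circ g = f \circ p \}$. Then every $f \in K$ satisfies that $1 - f$ is a unit of $\mathrm{End}(M)$. -/
/-- If `p : X → M` is a surjective cover-like map and every automorphism of `X` descends
along `p`, then any `f ∈ End M` induced by some `g ∈ J(End X)` satisfies that `1 - f` is a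
unit of `End M`. -/
theorem cover_kernel_contained_in_jacobson (R : Type*) [Ring R]
    (M X : Type*) [AddCommGroup M] [AddCommGroup X] [Module R M] [Module R X]
    (p : X →ₗ[R] M) (hp : Function.Surjective p)
    (hcov : ∀ h : X →ₗ[R] X, p ∘ₗ h = p → IsUnit (h : Module.End R X))
    (hcoinv : ∀ g : X →ₗ[R] X, IsUnit (g : Module.End R X) →
      ∃ f : M →ₗ[R] M, p ∘ₗ g = f ∘ₗ p) :
    ∀ f : M →ₗ[R] M,
      (∃ g : X →ₗ[R] X, (g : Module.End R X) ∈ Ideal.jacobson (⊥ : Ideal (Module.End R X)) ∧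
        p ∘ₗ g = f ∘ₗ p) →
      IsUnit (1 - f : Module.End R M) := by
  rintro f ⟨g, hg, hpg⟩
  have key : ∀ a : Module.End R X, a ∈ Ideal.jacobson (⊥ : Ideal (Module.End R X)) →
      ∃ z : Module.End R X, z * (1 - a) = 1 := by
    intro a ha
    obtain ⟨z, hz⟩ := Ideal.mem_jacobson_iff.mp ha (-1)
    rw [Ideal.mem_bot] at hz
    refine ⟨z, sub_eq_zero.mp ?_⟩
    rw [← hz]; noncomm_ring
  have hu : IsUnit ((1 : Module.End R X) - g) := by
    obtain ⟨z, hz⟩ := key g hg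
    have hzg : -(z * g) ∈ Ideal.jacobson (⊥ : Ideal (Module.End R X)) :=
      neg_mem (Ideal.mul_mem_left _ z hg)
    obtain ⟨w, hw⟩ := key _ hzg
    have hz2 : z - z * g = 1 := by rw [← hz]; noncomm_ring
    have hz' : (1 : Module.End R X) - -(z * g) = z := by
      rw [sub_neg_eq_add, ← hz2]; abel
    rw [hz'] at hw
    have hweq : w = 1 - g := by
      calc w = w * (z * (1 - g)) := by rw [hz, mul_one]
        _ = (w * z) * (1 - g) := by rw [mul_assoc]
        _ = 1 - g := by rw [hw, one_mul]
    exact isUnit_iff_exists.mpr ⟨z, hweq ▸ hw, hz⟩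
  obtain ⟨u, hu⟩ := hu
  obtain ⟨f', hf'⟩ := hcoinv ↑u⁻¹ (Units.isUnit _)
  have h1 : p ∘ₗ ((1 : Module.End R X) - g) = ((1 : Module.End R M) - f) ∘ₗ p := by
    ext x
    simp only [LinearMap.comp_apply, LinearMap.sub_apply, Module.End.one_apply, map_sub]
    have := LinearMap.congr_fun hpg x
    simp only [LinearMap.comp_apply] at this
    rw [this]
  have hmul1 : (((1 : Module.End R X) - g) * ↑u⁻¹ : Module.End R X) = 1 := by
    rw [← hu]; exact u.mul_inv
  have hmul2 : ((↑u⁻¹ : Module.End R X) * ((1 : Module.End R X) - g)) = 1 := by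
    rw [← hu]; exact u.inv_mul
  have hcancel : ∀ A B : M →ₗ[R] M, A ∘ₗ p = B ∘ₗ p → A = B := by
    intro A B h
    ext m
    obtain ⟨x, rfl⟩ := hp m
    exact LinearMap.congr_fun h x
  have key1 : ((1 : Module.End R M) - f) ∘ₗ f' = 1 := by
    apply hcancel
    ext x
    have e1 := LinearMap.congr_fun hf' x
    have e2 := LinearMap.congr_fun h1 ((↑u⁻¹ : Module.End R X) x)
    have e3 : ((1 : Module.End R X) - g) ((↑u⁻¹ : Module.End R X) x) = x := by
      have := DFunLike.congr_fun hmul1 x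
      simpa [Module.End.mul_apply] using this
    simp only [LinearMap.comp_apply] at e1 e2 ⊢
    rw [← e1, ← e2, e3]
    simp
  have key2 : f' ∘ₗ ((1 : Module.End R M) - f) = 1 := by
    apply hcancel
    ext x
    have e2 := LinearMap.congr_fun h1 x
    have e1 := LinearMap.congr_fun hf' (((1 : Module.End R X) - g) x)
    have e3 : (↑u⁻¹ : Module.End R X) (((1 : Module.End R X) - g) x) = x := by
      have := DFunLike.congr_fun hmul2 x
      simpa [Module.End.mul_apply] using this
    simp only [LinearMap.comp_apply] at e1 e2 ⊢
    rw [← e2, ← e1, e3]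
    simp
  exact isUnit_iff_exists.mpr ⟨f', key1, key2⟩
end
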